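/- Let BN = (f₁, ..., f_n) be a Boolean network over variables X = {x₁, ..., x_n} with each f_i given by a DNF formula φ_i, and let A_BN = {(pos(C), neg(C) ∪ {ι_{x_i}}, {x_i}) | C ∈ φ_i, 1 ≤ i ≤ n}. Then for any state s : X → 𝔹 with W_s = {x | s(x) = 1}, the result res_{A_BN}(W_s) equals {x_i | f_i(s) = 1}, i.e., the reaction system simulates one synchronous update step of BN. -/

import Mathlib

/-- A reaction over background type `α`: (reactants, inhibitors, products). -/
abbrev Rxn (α : Type) := Finset α × Finset α × Finset α

variable {α : Type} [DecidableEq α]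

/-- A reaction `r = (R, I, P)` is enabled in state `T` iff `R ⊆ T` and `I ∩ T = ∅`. -/
def enab (r : Rxn α) (T : Finset α) : Prop := r.1 ⊆ T ∧ Disjoint r.2.1 T

instance (r : Rxn α) (T : Finset α) : Decidable (enab r T) := by
  unfold enab; infer_instance

/-- `res_r(T)`: the product set if `r` is enabled in `T`, else `∅`. -/
def resr (r : Rxn α) (T : Finset α) : Finset α := if enab r T then r.2.2 else ∅

/-- `res_A(T) = ⋃_{r ∈ A} res_r(T)`. -/
def resA (A : Finset (Rxn α)) (T : Finset α) : Finset α := A.biUnion (fun r => resr r T)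

/-- State sequence of an interactive process starting in `X` with contexts `γ`:
`W₀ = X`, `W_{i+1} = C_{i+1} ∪ res_A(W_i)`. -/
def states (A : Finset (Rxn α)) (X : Finset α) (γ : ℕ → Finset α) : ℕ → Finset α
  | 0 => X
  | n + 1 => γ (n + 1) ∪ resA A (states A X γ n)

theorem mem_resA {A : Finset (Rxn α)} {T : Finset α} {a : α} :
    a ∈ resA A T ↔ ∃ r ∈ A, enab r T ∧ a ∈ r.2.2 := by
  simp only [resA, resr, Finset.mem_biUnion]
  refine exists_congr fun r => and_congr_right fun _ => ?_
  split_ifs with h <;> simp [h]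

theorem enab_insert_inhibitor {R I P T : Finset α} {b : α} (hb : b ∉ T) :
    enab (R, insert b I, P) T ↔ enab (R, I, P) T := by
  simp only [enab, Finset.disjoint_insert_left, hb, not_false_eq_true, true_and]

section BooleanNetwork

variable {κ : Type} [Fintype κ]

def bnReactions (x ι : κ → α) (φ : κ → Finset (Finset α × Finset α)) :
    Finset (Rxn α) :=
  Finset.univ.biUnion fun i => (φ i).image fun c => (c.1, insert (ι i) c.2, {x i})

theorem resA_bnReactions (x ι : κ → α) (φ : κ → Finset (Finset α × Finset α))
    {T : Finset α} (hT : ∀ i, ι i ∉ T) :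
    resA (bnReactions x ι φ) T =
      (Finset.univ.filter fun i => ∃ c ∈ φ i, c.1 ⊆ T ∧ Disjoint c.2 T).image x := by
  ext a
  simp only [mem_resA, bnReactions, Finset.mem_biUnion, Finset.mem_image, Finset.mem_filter,
    Finset.mem_univ, true_and]
  constructor
  · rintro ⟨-, ⟨i, c, hc, rfl⟩, hen, ha⟩
    rw [enab_insert_inhibitor (hT i)] at hen
    exact ⟨i, ⟨c, hc, hen⟩, (Finset.mem_singleton.mp ha).symm⟩
  · rintro ⟨i, ⟨c, hc, hen⟩, rfl⟩
    exact ⟨_, ⟨i, c, hc, rfl⟩, (enab_insert_inhibitor (hT i)).mpr hen,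
      Finset.mem_singleton_self _⟩

end BooleanNetwork

theorem stmt7_general (n : ℕ) (x ι : Fin n → α)
    (hdisj : ∀ i j, ι i ≠ x j)
    (φ : Fin n → Finset (Finset α × Finset α))
    (f : Fin n → (Fin n → Bool) → Bool)
    (hImpl : ∀ i (s : Fin n → Bool),
      f i s = true ↔ ∃ c ∈ φ i,
        c.1 ⊆ (Finset.univ.filter fun j => s j = true).image x ∧
        Disjoint c.2 ((Finset.univ.filter fun j => s j = true).image x))
    (s : Fin n → Bool) :
    resA ((Finset.univ : Finset (Fin n)).biUnion fun i =>
        (φ i).image fun c => (c.1, insert (ι i) c.2, ({x i} : Finset α)))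
      ((Finset.univ.filter fun j => s j = true).image x)
      = (Finset.univ.filter fun i => f i s = true).image x := by
  have hfresh : ∀ i, ι i ∉ (Finset.univ.filter fun j => s j = true).image x := by
    simp only [Finset.mem_image, not_exists, not_and]
    exact fun i j _ hj => hdisj i j hj.symm
  rw [← bnReactions, resA_bnReactions x ι φ hfresh]
  simp only [hImpl]

/-- the reaction system
`A_BN = {(pos(C), neg(C) ∪ {ι_{x_i}}, {x_i}) | C ∈ φ_i, 1 ≤ i ≤ n}` simulates one
synchronous update step of the Boolean network `BN = (f₁, …, f_n)`:
`res_{A_BN}(W_s) = {x_i | f_i(s) = 1}`. -/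
theorem stmt7 (n : ℕ) (x ι : Fin n → α)
    (hx : Function.Injective x) (hι : Function.Injective ι)
    (hdisj : ∀ i j, ι i ≠ x j)
    (φ : Fin n → Finset (Finset α × Finset α))
    (hφ : ∀ i, ∀ c ∈ φ i, c.1 ⊆ Finset.univ.image x ∧ c.2 ⊆ Finset.univ.image x ∧
      Disjoint c.1 c.2)
    (f : Fin n → (Fin n → Bool) → Bool)
    (hImpl : ∀ i (s : Fin n → Bool),
      f i s = true ↔ ∃ c ∈ φ i,
        c.1 ⊆ (Finset.univ.filter fun j => s j = true).image x ∧
        Disjoint c.2 ((Finset.univ.filter fun j => s j = true).image x))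
    (s : Fin n → Bool) :
    resA ((Finset.univ : Finset (Fin n)).biUnion fun i =>
        (φ i).image fun c => (c.1, insert (ι i) c.2, ({x i} : Finset α)))
      ((Finset.univ.filter fun j => s j = true).image x)
      = (Finset.univ.filter fun i => f i s = true).image x :=
  stmt7_general n x ι hdisj φ f hImpl s
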